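/- For every complex number q with |q| < 1, the following identity holds: (1+q^3) · Σ_{n≥0} (−q^2; q^2)_n q^{4n+2} / (q; q^2)_{n+1} = (q^4; q^4)_∞/(q^2; q)_∞ − 1. -/

import Mathlib

/-- The finite q-Pochhammer symbol `(a; q)_n = ∏_{j=0}^{n-1} (1 - a q^j)`. -/
noncomputable def qPoch (a q : ℂ) (n : ℕ) : ℂ := ∏ j ∈ Finset.range n, (1 - a * q ^ j)

/-- The infinite q-Pochhammer symbol `(a; q)_∞ = ∏_{j=0}^{∞} (1 - a q^j)`. -/
noncomputable def qPochInf (a q : ℂ) : ℂ := ∏' j : ℕ, (1 - a * q ^ j)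

/-! With `F n = seriesAntidiff q n = (1 - q + q^(2n+2) - q^(4n+2)) (-q²;q²)_n / (q;q²)_(n+1)`,
the `n`-th summand times `1 + q³` is `F (n+1) - F n`, so the series telescopes to
`lim F - F 0 = (1 - q) (-q²;q²)_∞ / (q;q²)_∞ - 1`. Splitting `(q²;q)_∞` into its even- and
odd-indexed factors, `(q²;q)_∞ = (q²;q²)_∞ (q³;q²)_∞`, and using
`(q²;q²)_∞ (-q²;q²)_∞ = (q⁴;q⁴)_∞` turns this limit into `(q⁴;q⁴)_∞ / (q²;q)_∞`. -/

open Filter Topology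

lemma summable_of_succ_eq_mul_of_tendsto {R : Type*} [NormedRing R] [CompleteSpace R]
    {f ρ : ℕ → R} {l : R} (hl : ‖l‖ < 1) (hρ : Tendsto ρ atTop (𝓝 l))
    (hf : ∀ n, f (n + 1) = f n * ρ n) : Summable f := by
  obtain ⟨r, hlr, hr⟩ := exists_between hl
  refine summable_of_ratio_norm_eventually_le hr ?_
  filter_upwards [hρ.norm.eventually (gt_mem_nhds hlr)] with n hn
  rw [hf, mul_comm r]
  exact (norm_mul_le _ _).trans (mul_le_mul_of_nonneg_left hn.le (norm_nonneg _))

lemma hasSum_of_eq_sub_of_tendsto {E : Type*} [AddCommGroup E] [TopologicalSpace E]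
    [IsTopologicalAddGroup E] [T2Space E] {g F : ℕ → E} {L : E} (hg : Summable g)
    (hgF : ∀ n, g n = F (n + 1) - F n) (hF : Tendsto F atTop (𝓝 L)) : HasSum g (L - F 0) := by
  rw [hg.hasSum_iff_tendsto_nat]
  simpa only [hgF, Finset.sum_range_sub] using hF.sub_const (F 0)

lemma norm_pow_lt_one {q : ℂ} (hq : ‖q‖ < 1) {k : ℕ} (hk : k ≠ 0) : ‖q ^ k‖ < 1 := by
  simpa only [norm_pow] using pow_lt_one₀ (norm_nonneg q) hq hk

lemma qPoch_succ (a q : ℂ) (n : ℕ) : qPoch a q (n + 1) = qPoch a q n * (1 - a * q ^ n) :=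
  Finset.prod_range_succ _ _

section QPochhammer

variable {q : ℂ}

lemma one_sub_mul_pow_ne_zero {a : ℂ} (ha : ‖a‖ < 1) (hq : ‖q‖ ≤ 1) (j : ℕ) :
    1 - a * q ^ j ≠ 0 := by
  refine sub_ne_zero.2 fun h => ?_
  have : ‖a * q ^ j‖ < 1 := by
    rw [norm_mul, norm_pow]
    exact (mul_le_of_le_one_right (norm_nonneg a) (pow_le_one₀ (norm_nonneg q) hq)).trans_lt ha
  simp [← h] at this

lemma qPoch_ne_zero {a : ℂ} (ha : ‖a‖ < 1) (hq : ‖q‖ ≤ 1) (n : ℕ) : qPoch a q n ≠ 0 :=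
  Finset.prod_ne_zero_iff.2 fun j _ => one_sub_mul_pow_ne_zero ha hq j

variable (hq : ‖q‖ < 1)
include hq

lemma summable_norm_neg_mul_pow (a : ℂ) : Summable fun j : ℕ => ‖-(a * q ^ j)‖ := by
  simpa only [norm_neg, norm_mul, norm_pow] using
    (summable_geometric_of_lt_one (norm_nonneg q) hq).mul_left ‖a‖

lemma multipliable_one_sub_mul_pow (a : ℂ) : Multipliable fun j : ℕ => 1 - a * q ^ j := by
  simpa only [← sub_eq_add_neg] using
    multipliable_one_add_of_summable (summable_norm_neg_mul_pow hq a)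

lemma qPochInf_ne_zero {a : ℂ} (ha : ‖a‖ < 1) : qPochInf a q ≠ 0 := by
  rw [qPochInf]
  simpa only [← sub_eq_add_neg] using tprod_one_add_ne_zero_of_summable
    (by simpa only [← sub_eq_add_neg] using one_sub_mul_pow_ne_zero ha hq.le)
    (summable_norm_neg_mul_pow hq a)

lemma tendsto_qPoch (a : ℂ) : Tendsto (qPoch a q) atTop (𝓝 (qPochInf a q)) :=
  (multipliable_one_sub_mul_pow hq a).hasProd.tendsto_prod_nat

lemma qPochInf_eq_one_sub_mul (a : ℂ) : qPochInf a q = (1 - a) * qPochInf (a * q) q := by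
  rw [qPochInf, tprod_eq_zero_mul' ?_, qPochInf]
  · simp only [pow_zero, mul_one, pow_succ, mul_assoc, mul_comm q]
  · simpa only [pow_succ, mul_assoc, mul_comm q] using multipliable_one_sub_mul_pow hq (a * q)

lemma qPochInf_eq_mul_qPochInf_sq (a : ℂ) :
    qPochInf a q = qPochInf a (q ^ 2) * qPochInf (a * q) (q ^ 2) := by
  have hq2 : ‖q ^ 2‖ < 1 := norm_pow_lt_one hq two_ne_zero
  have hodd (k : ℕ) : a * q ^ (2 * k + 1) = a * q * (q ^ 2) ^ k := by ring
  have he : Multipliable fun k : ℕ => 1 - a * q ^ (2 * k) := by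
    simpa only [pow_mul] using multipliable_one_sub_mul_pow hq2 a
  have ho : Multipliable fun k : ℕ => 1 - a * q ^ (2 * k + 1) := by
    simpa only [hodd] using multipliable_one_sub_mul_pow hq2 (a * q)
  rw [qPochInf, qPochInf, qPochInf, ← tprod_even_mul_odd (f := fun k => 1 - a * q ^ k) he ho]
  simp only [pow_mul, hodd]

lemma qPochInf_mul_qPochInf_neg (a : ℂ) :
    qPochInf a q * qPochInf (-a) q = qPochInf (a ^ 2) (q ^ 2) := by
  rw [qPochInf, qPochInf, ← (multipliable_one_sub_mul_pow hq a).tprod_mul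
    (multipliable_one_sub_mul_pow hq (-a)), qPochInf]
  exact tprod_congr fun j => by ring

end QPochhammer

section Series

variable {q : ℂ}

noncomputable def seriesTerm (q : ℂ) (n : ℕ) : ℂ :=
  qPoch (-q ^ 2) (q ^ 2) n * q ^ (4 * n + 2) / qPoch q (q ^ 2) (n + 1)

noncomputable def seriesAntidiff (q : ℂ) (n : ℕ) : ℂ :=
  (1 - q + q ^ (2 * n + 2) - q ^ (4 * n + 2)) * qPoch (-q ^ 2) (q ^ 2) n / qPoch q (q ^ 2) (n + 1)

lemma seriesAntidiff_zero (hq : q ≠ 1) : seriesAntidiff q 0 = 1 := by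
  have : 1 - q ≠ 0 := sub_ne_zero.2 hq.symm
  simp [seriesAntidiff, qPoch, this]

variable (hq : ‖q‖ < 1)
include hq

lemma seriesTerm_succ (n : ℕ) :
    seriesTerm q (n + 1) =
      seriesTerm q n * ((1 + q ^ 2 * (q ^ 2) ^ n) * q ^ 4 / (1 - q ^ 3 * (q ^ 2) ^ n)) := by
  have hq2 : ‖q ^ 2‖ < 1 := norm_pow_lt_one hq two_ne_zero
  have hD := qPoch_ne_zero hq hq2.le (n + 1)
  have hfac : 1 - q * (q ^ 2) ^ (n + 1) ≠ 0 := one_sub_mul_pow_ne_zero hq hq2.le (n + 1)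
  rw [seriesTerm, seriesTerm, qPoch_succ _ _ (n + 1), qPoch_succ]
  rw [show q * (q ^ 2) ^ (n + 1) = q ^ 3 * (q ^ 2) ^ n by ring] at hfac ⊢
  field_simp
  ring

lemma summable_seriesTerm : Summable (seriesTerm q) := by
  have hq2 : ‖q ^ 2‖ < 1 := norm_pow_lt_one hq two_ne_zero
  have hpow := tendsto_pow_atTop_nhds_zero_of_norm_lt_one hq2
  refine summable_of_succ_eq_mul_of_tendsto (norm_pow_lt_one hq four_ne_zero) ?_
    (seriesTerm_succ hq)
  simpa [Pi.div_def] using ((hpow.const_mul (q ^ 2)).const_add 1).mul_const (q ^ 4) |>.div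
    ((hpow.const_mul (q ^ 3)).const_sub 1) (by simp)

lemma one_add_pow_three_mul_seriesTerm (n : ℕ) :
    (1 + q ^ 3) * seriesTerm q n = seriesAntidiff q (n + 1) - seriesAntidiff q n := by
  have hq2 : ‖q ^ 2‖ < 1 := norm_pow_lt_one hq two_ne_zero
  have hD := qPoch_ne_zero hq hq2.le (n + 1)
  have hfac : 1 - q * (q ^ 2) ^ (n + 1) ≠ 0 := one_sub_mul_pow_ne_zero hq hq2.le (n + 1)
  rw [seriesTerm, seriesAntidiff, seriesAntidiff, qPoch_succ _ _ (n + 1), qPoch_succ (-q ^ 2)]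
  field_simp
  ring

lemma tendsto_seriesAntidiff :
    Tendsto (seriesAntidiff q) atTop
      (𝓝 ((1 - q) * qPochInf (-q ^ 2) (q ^ 2) / qPochInf q (q ^ 2))) := by
  have hq2 : ‖q ^ 2‖ < 1 := norm_pow_lt_one hq two_ne_zero
  have hpow (k : ℕ) : Tendsto (fun n : ℕ => q ^ ((k + 1) * n + 2)) atTop (𝓝 0) :=
    (tendsto_pow_atTop_nhds_zero_of_norm_lt_one hq).comp
      (tendsto_atTop_mono (fun n => by simp only [id]; nlinarith) tendsto_id)
  have hcoef : Tendsto (fun n : ℕ => 1 - q + q ^ (2 * n + 2) - q ^ (4 * n + 2)) atTop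
      (𝓝 (1 - q)) := by
    simpa using ((hpow 1).const_add (1 - q)).sub (hpow 3)
  exact (hcoef.mul (tendsto_qPoch hq2 _)).div
    ((tendsto_qPoch hq2 q).comp (tendsto_add_atTop_nat 1)) (qPochInf_ne_zero hq2 hq)

lemma one_sub_mul_qPochInf_div_qPochInf :
    (1 - q) * qPochInf (-q ^ 2) (q ^ 2) / qPochInf q (q ^ 2) =
      qPochInf (q ^ 4) (q ^ 4) / qPochInf (q ^ 2) q := by
  have hq2 : ‖q ^ 2‖ < 1 := norm_pow_lt_one hq two_ne_zero
  have hq3 : ‖q ^ 3‖ < 1 := norm_pow_lt_one hq three_ne_zero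
  have h1 : 1 - q ≠ 0 := by simpa using one_sub_mul_pow_ne_zero hq hq.le 0
  have hB := qPochInf_ne_zero hq2 hq2
  have hC := qPochInf_ne_zero hq2 hq3
  have hsq := qPochInf_mul_qPochInf_neg hq2 (q ^ 2)
  rw [show (q ^ 2) ^ 2 = q ^ 4 by ring] at hsq
  rw [qPochInf_eq_one_sub_mul hq2 q, qPochInf_eq_mul_qPochInf_sq hq (q ^ 2), ← hsq,
    show q * q ^ 2 = q ^ 3 by ring, show q ^ 2 * q = q ^ 3 by ring]
  field_simp

end Series

theorem stmt_3 (q : ℂ) (hq : ‖q‖ < 1) :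
    (1 + q ^ 3) * ∑' n : ℕ, qPoch (-q ^ 2) (q ^ 2) n * q ^ (4 * n + 2) / qPoch q (q ^ 2) (n + 1) =
      qPochInf (q ^ 4) (q ^ 4) / qPochInf (q ^ 2) q - 1 := by
  have hq1 : q ≠ 1 := by rintro rfl; simp at hq
  have h := hasSum_of_eq_sub_of_tendsto ((summable_seriesTerm hq).mul_left (1 + q ^ 3))
    (one_add_pow_three_mul_seriesTerm hq) (tendsto_seriesAntidiff hq)
  rw [seriesAntidiff_zero hq1, one_sub_mul_qPochInf_div_qPochInf hq] at h
  rw [← tsum_mul_left]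
  exact h.tsum_eq
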